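/- Assume in addition that σ is gauge invariant, σ N_f = N_f σ where N_f = Σ_j (f_j)ᴴ f_j, and Tr σ = 1. Then for every finset I ⊆ Fin m, Φ*(f_I) = Σ_{L ⊆ Fin m, |L| = |I|} det(A_{I×L}) f_L; that is, the action on products of annihilation operators is given by the exterior power (compound matrix) of A. -/

import Mathlib

open Matrix Finset Kronecker ComplexConjugate
open scoped ComplexOrder

noncomputable section

/-- Ordered product of a family over a finset, factors in increasing index order. -/
def oprod {R : Type*} [Monoid R] {m : ℕ} (x : Fin m → R) (I : Finset (Fin m)) : R :=
  ((I.sort (· ≤ ·)).map x).prod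

/-- Complex matrices indexed by `Fin (2^m)`. -/
abbrev Mat (m : ℕ) := Matrix (Fin (2^m)) (Fin (2^m)) ℂ

/-- Complex matrices on the tensor product `ℂ^{2^m} ⊗ ℂ^{2^m}`. -/
abbrev Mat2 (m : ℕ) := Matrix (Fin (2^m) × Fin (2^m)) (Fin (2^m) × Fin (2^m)) ℂ

variable {m : ℕ}

/-- The parity operator `P = ∏_j (1 - 2 f_jᴴ f_j)`. -/
def parity (f : Fin m → Mat m) : Mat m :=
  oprod (fun j => 1 - (2:ℂ) • ((f j)ᴴ * f j)) Finset.univ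

/-- Parity-trick operator `a_i = f_i ⊗ 1`. -/
def aOp (f : Fin m → Mat m) (i : Fin m) : Mat2 m := f i ⊗ₖ (1 : Mat m)

/-- Parity-trick operator `b_i = P ⊗ f_i`. -/
def bOp (f : Fin m → Mat m) (i : Fin m) : Mat2 m := parity f ⊗ₖ f i

/-- Partial trace over the second tensor factor. -/
def ptrace2 (M : Mat2 m) : Mat m := Matrix.of fun i j => ∑ s, M (i, s) (j, s)

/-- The Heisenberg-picture map `Φ*(X) = Tr₂[(1 ⊗ σ) Uᴴ (X ⊗ 1) U]`. -/
def PhiStar (U : Mat2 m) (σ : Mat m) (X : Mat m) : Mat m :=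
  ptrace2 (((1 : Mat m) ⊗ₖ σ) * Uᴴ * (X ⊗ₖ (1 : Mat m)) * U)

/-- Environment correlation tensor `Γ_{Ξ;Ω} = Tr(σ f_Ξ† f_Ω)`. -/
def Gam (f : Fin m → Mat m) (σ : Mat m) (Ξ Ω : Finset (Fin m)) : ℂ :=
  Matrix.trace (σ * (oprod f Ξ)ᴴ * oprod f Ω)

/-- `det (A_{I×L} | B_{I×Λ})`: determinant of the square matrix whose rows are indexed
by `I` in increasing order, whose first `|L|` columns are entries of `A` with columns
from `L` in increasing order, and whose last `|Λ|` columns are entries of `B` with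
columns from `Λ` in increasing order (defined to be `0` if `|L| + |Λ| ≠ |I|`). -/
def concatDet {m : ℕ} (A B : Matrix (Fin m) (Fin m) ℂ) (I L Λ : Finset (Fin m)) : ℂ :=
  if h : L.card + Λ.card = I.card then
    Matrix.det (Matrix.of fun r c : Fin I.card =>
      Sum.elim
        (fun l => A (I.orderIsoOfFin rfl r) (L.orderIsoOfFin rfl l))
        (fun w => B (I.orderIsoOfFin rfl r) (Λ.orderIsoOfFin rfl w))
        (finSumFinEquiv.symm (Fin.cast h.symm c)))
  else 0

/-- The minor `det(A_{I×L})` with rows from `I` and columns from `L`, each in increasing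
order (defined to be `0` if `|L| ≠ |I|`). -/
def subDet {m : ℕ} (A : Matrix (Fin m) (Fin m) ℂ) (I L : Finset (Fin m)) : ℂ :=
  if h : L.card = I.card then
    Matrix.det (Matrix.of fun r c : Fin I.card =>
      A (I.orderIsoOfFin rfl r) (L.orderIsoOfFin h c))
  else 0

/-- The number operator `N_f = ∑_j f_jᴴ f_j`. -/
def numberOp (f : Fin m → Mat m) : Mat m := ∑ j, (f j)ᴴ * f j

/-! ### Auxiliary lemmas -/

section ListLemmas

variable {R : Type*} [Ring R]

lemma list_prod_mul_anticomm (u : List R) (x : R)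
    (h : ∀ y ∈ u, x * y = -(y * x)) :
    u.prod * x = ((-1 : R) ^ u.length) * (x * u.prod) := by
  induction u with
  | nil => simp
  | cons y u ih =>
    have hy : x * y = -(y * x) := h y (by simp)
    have hu : ∀ z ∈ u, x * z = -(z * x) := fun z hz => h z (by simp [hz])
    have hyx : y * x = -(x * y) := by rw [hy, neg_neg]
    calc (y :: u).prod * x = y * (u.prod * x) := by
          rw [List.prod_cons, mul_assoc]
      _ = y * ((-1 : R) ^ u.length * (x * u.prod)) := by rw [ih hu]
      _ = (-1 : R) ^ u.length * ((y * x) * u.prod) := by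
          rw [← mul_assoc, ← ((Commute.neg_one_left y).pow_left u.length).eq,
            mul_assoc, mul_assoc]
      _ = (-1 : R) ^ (y :: u).length * (x * (y :: u).prod) := by
          rw [hyx, List.length_cons, pow_succ, List.prod_cons]
          simp [neg_mul, mul_neg, mul_assoc]

lemma sublist_pair_decomp {α : Type*} {a : α} :
    ∀ {u : List α}, List.Sublist [a, a] u → ∃ s t w, u = s ++ a :: (t ++ a :: w) := by
  intro u h
  induction u with
  | nil => exact absurd (List.eq_nil_of_sublist_nil h) (by simp)
  | cons b u ih =>
    rcases h with _ | @⟨_, _, _, h⟩ | @⟨_, _, _, h⟩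
    · obtain ⟨s, t, w, rfl⟩ := ih h
      exact ⟨b :: s, t, w, rfl⟩
    · -- b = a, [a] <+ u
      have ha : a ∈ u := h.subset (by simp)
      obtain ⟨t, w, rfl⟩ := List.append_of_mem ha
      exact ⟨[], t, w, rfl⟩

lemma list_prod_eq_zero_of_not_nodup (u : List R)
    (hanti : ∀ x ∈ u, ∀ y ∈ u, x * y = -(y * x)) (hsq : ∀ x ∈ u, x * x = 0)
    (h : ¬ u.Nodup) : u.prod = 0 := by
  rw [List.nodup_iff_sublist] at h
  push_neg at h
  obtain ⟨a, ha⟩ := h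
  obtain ⟨s, t, w, rfl⟩ := sublist_pair_decomp ha
  have hmem : a ∈ s ++ a :: (t ++ a :: w) := by simp
  have ht : ∀ y ∈ t, a * y = -(y * a) := fun y hy => hanti a hmem y (by simp [hy])
  have key : a * (t ++ a :: w).prod = 0 := by
    rw [List.prod_append, List.prod_cons, ← mul_assoc,
      ← mul_assoc]
    have : a * t.prod * a = (-1 : R) ^ t.length * (a * a) * t.prod := by
      have h2 := list_prod_mul_anticomm t a ht
      calc a * t.prod * a = a * (t.prod * a) := by rw [mul_assoc]
        _ = a * ((-1 : R) ^ t.length * (a * t.prod)) := by rw [h2]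
        _ = (-1 : R) ^ t.length * (a * a) * t.prod := by
            rw [← mul_assoc, ← ((Commute.neg_one_left a).pow_left t.length).eq]
            simp [mul_assoc]
    rw [this, hsq a hmem]
    simp
  rw [List.prod_append, List.prod_cons, key]
  simp

end ListLemmas

section LinComb

variable {m : ℕ}

/-- Linear combination of a family of matrices. -/
def linComb {E : Type*} [Fintype E] {Mo : Type*} [AddCommMonoid Mo] [Module ℂ Mo]
    (w : E → Mo) : (E → ℂ) →ₗ[ℂ] Mo where
  toFun x := ∑ j, x j • w j
  map_add' x y := by simp [add_smul, Finset.sum_add_distrib]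
  map_smul' c x := by simp [smul_smul, Finset.smul_sum]

lemma linComb_single {E : Type*} [Fintype E] [DecidableEq E] {Mo : Type*}
    [AddCommMonoid Mo] [Module ℂ Mo] (w : E → Mo) (e : E) :
    linComb w (Pi.single e 1) = w e := by
  simp [linComb, Pi.single_apply]

lemma prod_linComb_expand {E : Type*} [Fintype E] [DecidableEq E] {Mo : Type*}
    [Ring Mo] [Algebra ℂ Mo] (w : E → Mo) {n : ℕ} (v : Fin n → E → ℂ) :
    (List.ofFn fun t => linComb w (v t)).prod
      = ∑ g : Fin n → E, (∏ t, v t (g t)) • (List.ofFn fun t => w (g t)).prod := by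
  have hM : ∀ u : Fin n → E → ℂ, (List.ofFn fun t => linComb w (u t)).prod
      = ((MultilinearMap.mkPiAlgebraFin ℂ n Mo).compLinearMap fun _ => linComb w) u := by
    intro u
    simp [MultilinearMap.mkPiAlgebraFin_apply]
  rw [hM]
  have hv : v = fun t => ∑ e : E, v t e • (Pi.single e 1 : E → ℂ) := by
    funext t j
    simp [Pi.single_apply]
  conv_lhs => rw [hv]
  rw [MultilinearMap.map_sum]
  refine Finset.sum_congr rfl fun g _ => ?_
  rw [MultilinearMap.map_smul_univ]
  congr 1
  rw [← hM]
  simp [linComb_single]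

end LinComb
section AltMachinery

variable {m : ℕ} (f : Fin m → Mat m)

lemma linComb_anticomm (hf1 : ∀ i j, f i * f j = -(f j * f i)) (x y : Fin m → ℂ) :
    linComb f x * linComb f y = -(linComb f y * linComb f x) := by
  show (∑ a, x a • f a) * (∑ b, y b • f b) = -((∑ b, y b • f b) * (∑ a, x a • f a))
  have e1 : ∀ (x y : Fin m → ℂ), (∑ a, x a • f a) * (∑ b, y b • f b)
      = ∑ a, ∑ b, (x a * y b) • (f a * f b) := by
    intro x y
    rw [Finset.sum_mul_sum]
    exact Finset.sum_congr rfl fun a _ => Finset.sum_congr rfl fun b _ => by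
      rw [smul_mul_assoc, mul_smul_comm, smul_smul]
  rw [e1, e1]
  have key : ∀ a b, (x a * y b) • (f a * f b) = -((y b * x a) • (f b * f a)) := by
    intro a b; rw [hf1 a b, smul_neg, mul_comm (x a)]
  calc ∑ a, ∑ b, (x a * y b) • (f a * f b)
      = ∑ a, ∑ b, -((y b * x a) • (f b * f a)) :=
        Finset.sum_congr rfl fun a _ => Finset.sum_congr rfl fun b _ => key a b
    _ = -∑ a, ∑ b, (y b * x a) • (f b * f a) := by
        rw [← Finset.sum_neg_distrib]
        exact Finset.sum_congr rfl fun a _ => Finset.sum_neg_distrib _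
    _ = -∑ b, ∑ a, (y b * x a) • (f b * f a) := by rw [Finset.sum_comm]

lemma linComb_sq_zero (hf1 : ∀ i j, f i * f j = -(f j * f i)) (x : Fin m → ℂ) :
    linComb f x * linComb f x = 0 := by
  have h := linComb_anticomm f hf1 x x
  have h2 : (2 : ℂ) • (linComb f x * linComb f x) = 0 := by
    rw [two_smul]
    nth_rewrite 1 [h]
    simp
  rcases smul_eq_zero.mp h2 with h' | h'
  · exact absurd h' (by norm_num)
  · exact h'

/-- The alternating map sending `(v_1, …, v_n)` to `lin(v_1) ⋯ lin(v_n)`. -/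
def altF (hf1 : ∀ i j, f i * f j = -(f j * f i)) (n : ℕ) :
    AlternatingMap ℂ (Fin m → ℂ) (Mat m) (Fin n) where
  toMultilinearMap :=
    (MultilinearMap.mkPiAlgebraFin ℂ n (Mat m)).compLinearMap fun _ => linComb f
  map_eq_zero_of_eq' v i j hv hij := by
    show (MultilinearMap.mkPiAlgebraFin ℂ n (Mat m)) (fun t => linComb f (v t)) = 0
    rw [MultilinearMap.mkPiAlgebraFin_apply]
    apply list_prod_eq_zero_of_not_nodup
    · intro x hx y hy
      rw [List.mem_ofFn] at hx hy
      obtain ⟨s, rfl⟩ := hx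
      obtain ⟨t, rfl⟩ := hy
      exact linComb_anticomm f hf1 _ _
    · intro x hx
      rw [List.mem_ofFn] at hx
      obtain ⟨s, rfl⟩ := hx
      exact linComb_sq_zero f hf1 _
    · rw [List.nodup_ofFn]
      intro hinj
      exact hij (hinj (congrArg (linComb f) hv))

lemma altF_apply (hf1 : ∀ i j, f i * f j = -(f j * f i)) (n : ℕ) (v : Fin n → Fin m → ℂ) :
    altF f hf1 n v = (List.ofFn fun t => linComb f (v t)).prod := by
  show (MultilinearMap.mkPiAlgebraFin ℂ n (Mat m)) (fun t => linComb f (v t)) = _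
  rw [MultilinearMap.mkPiAlgebraFin_apply]

lemma altF_single (hf1 : ∀ i j, f i * f j = -(f j * f i)) {n : ℕ} (k : Fin n → Fin m) :
    altF f hf1 n (fun t => (Pi.single (k t) 1 : Fin m → ℂ))
      = (List.ofFn fun t => f (k t)).prod := by
  rw [altF_apply]
  simp [linComb_single]

lemma prodF_eq_zero_of_not_injective (hf1 : ∀ i j, f i * f j = -(f j * f i)) {n : ℕ}
    (k : Fin n → Fin m) (hk : ¬ Function.Injective k) :
    (List.ofFn fun t => f (k t)).prod = 0 := by
  rw [Function.not_injective_iff] at hk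
  obtain ⟨i, j, hij, hne⟩ := hk
  rw [← altF_single f hf1 k]
  exact AlternatingMap.map_eq_zero_of_eq _ _ (by rw [hij]) hne

lemma prodF_perm (hf1 : ∀ i j, f i * f j = -(f j * f i)) {n : ℕ}
    (k : Fin n → Fin m) (π : Equiv.Perm (Fin n)) :
    (List.ofFn fun t => f (k (π t))).prod
      = ((Equiv.Perm.sign π : ℤ) : ℂ) • (List.ofFn fun t => f (k t)).prod := by
  have h := AlternatingMap.map_perm (altF f hf1 n)
    (fun t => (Pi.single (k t) 1 : Fin m → ℂ)) π
  rw [altF_single f hf1] at h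
  have h2 : altF f hf1 n ((fun t => (Pi.single (k t) 1 : Fin m → ℂ)) ∘ π)
      = (List.ofFn fun t => f (k (π t))).prod := by
    rw [show ((fun t => (Pi.single (k t) 1 : Fin m → ℂ)) ∘ π)
        = fun t => (Pi.single ((k ∘ π) t) 1 : Fin m → ℂ) from rfl]
    exact altF_single f hf1 (k ∘ π)
  rw [h2] at h
  rw [h, Units.smul_def]
  rw [Int.cast_smul_eq_zsmul]

end AltMachinery
section CARLemmas

variable {m : ℕ} (f : Fin m → Mat m)

lemma anticomm_of_car (hff : ∀ i j : Fin m, f i * f j + f j * f i = 0) :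
    ∀ i j, f i * f j = -(f j * f i) := fun i j =>
  eq_neg_of_add_eq_zero_left (hff i j)

lemma numberOp_mul_f (hff : ∀ i j : Fin m, f i * f j + f j * f i = 0)
    (hffd : ∀ i j : Fin m, f i * (f j)ᴴ + (f j)ᴴ * f i = if i = j then 1 else 0)
    (k : Fin m) :
    numberOp f * f k = f k * numberOp f - f k := by
  have h1 : ∀ j, (f j)ᴴ * f j * f k
      = f k * ((f j)ᴴ * f j) - (if k = j then (1 : Mat m) else 0) * f j := by
    intro j
    have hjk : f j * f k = -(f k * f j) := anticomm_of_car f hff j k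
    have hdk : (f j)ᴴ * f k = (if k = j then (1 : Mat m) else 0) - f k * (f j)ᴴ := by
      have := hffd k j
      linear_combination (norm := noncomm_ring) this
    calc (f j)ᴴ * f j * f k = (f j)ᴴ * (f j * f k) := by rw [mul_assoc]
      _ = -((f j)ᴴ * f k * f j) := by rw [hjk]; noncomm_ring
      _ = -(((if k = j then (1 : Mat m) else 0) - f k * (f j)ᴴ) * f j) := by rw [hdk]
      _ = f k * ((f j)ᴴ * f j) - (if k = j then (1 : Mat m) else 0) * f j := by
          noncomm_ring
  show (∑ j, (f j)ᴴ * f j) * f k = f k * (∑ j, (f j)ᴴ * f j) - f k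
  rw [Finset.sum_mul, Finset.mul_sum]
  calc ∑ j, (f j)ᴴ * f j * f k
      = ∑ j, (f k * ((f j)ᴴ * f j) - (if k = j then (1 : Mat m) else 0) * f j) :=
        Finset.sum_congr rfl fun j _ => h1 j
    _ = (∑ j, f k * ((f j)ᴴ * f j)) - ∑ j, (if k = j then (1 : Mat m) else 0) * f j := by
        rw [Finset.sum_sub_distrib]
    _ = (∑ j, f k * ((f j)ᴴ * f j)) - f k := by
        congr 1
        calc ∑ j, (if k = j then (1 : Mat m) else 0) * f j
            = ∑ j, (if k = j then f j else 0) := by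
              refine Finset.sum_congr rfl fun j _ => ?_
              split <;> simp
          _ = f k := by simp

/-- Weight of a word: products of `1`s (at `inl`) and `f`s (at `inr`). -/
lemma numberOp_word (hff : ∀ i j : Fin m, f i * f j + f j * f i = 0)
    (hffd : ∀ i j : Fin m, f i * (f j)ᴴ + (f j)ᴴ * f i = if i = j then 1 else 0)
    (u : List (Fin m ⊕ Fin m)) :
    numberOp f * (u.map (Sum.elim (fun _ => (1 : Mat m)) f)).prod
      = (u.map (Sum.elim (fun _ => (1 : Mat m)) f)).prod * numberOp f
        - ((u.countP Sum.isRight : ℕ) : ℂ) • (u.map (Sum.elim (fun _ => (1 : Mat m)) f)).prod := by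
  induction u with
  | nil => simp
  | cons s u ih =>
    rcases s with k | k
    · simpa [List.countP_cons] using ih
    · have hNf := numberOp_mul_f f hff hffd k
      set Y := (u.map (Sum.elim (fun _ => (1 : Mat m)) f)).prod with hY
      set q : ℂ := ((u.countP Sum.isRight : ℕ) : ℂ) with hq
      have hcount : (((Sum.inr k :: u).countP Sum.isRight : ℕ) : ℂ) = q + 1 := by
        rw [List.countP_cons]
        simp [hq]
      rw [List.map_cons, List.prod_cons]
      show numberOp f * (f k * Y) = (f k * Y) * numberOp f
        - (((Sum.inr k :: u).countP Sum.isRight : ℕ) : ℂ) • (f k * Y)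
      rw [hcount, ← mul_assoc, hNf]
      rw [sub_mul, mul_assoc, ih]
      rw [mul_sub]
      rw [mul_smul_comm]
      rw [sub_sub, add_smul, one_smul]
      rw [mul_assoc]

lemma trace_kill (σ : Mat m)
    (hσgauge : σ * numberOp f = numberOp f * σ)
    (Y : Mat m) (q : ℂ) (hq : q ≠ 0)
    (hY : numberOp f * Y = Y * numberOp f - q • Y) :
    Matrix.trace (σ * Y) = 0 := by
  have h1 : Matrix.trace (σ * (numberOp f * Y))
      = Matrix.trace (σ * (Y * numberOp f)) - q * Matrix.trace (σ * Y) := by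
    rw [hY, mul_sub, Matrix.mul_smul, Matrix.trace_sub, Matrix.trace_smul]
    simp
  have h2 : Matrix.trace (σ * (numberOp f * Y))
      = Matrix.trace (σ * (Y * numberOp f)) := by
    calc Matrix.trace (σ * (numberOp f * Y))
        = Matrix.trace ((σ * numberOp f) * Y) := by rw [mul_assoc]
      _ = Matrix.trace ((numberOp f * σ) * Y) := by rw [hσgauge]
      _ = Matrix.trace (numberOp f * (σ * Y)) := by rw [mul_assoc]
      _ = Matrix.trace ((σ * Y) * numberOp f) := Matrix.trace_mul_comm _ _
      _ = Matrix.trace (σ * (Y * numberOp f)) := by rw [mul_assoc]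
  have h3 : q * Matrix.trace (σ * Y) = 0 := sub_eq_self.mp (h1.symm.trans h2)
  exact (mul_eq_zero.mp h3).resolve_left hq

end CARLemmas

section KronPtrace

variable {m : ℕ}

lemma ofFn_prod_kron : ∀ (n : ℕ) (x y : Fin n → Mat m),
    (List.ofFn fun t => x t ⊗ₖ y t).prod = (List.ofFn x).prod ⊗ₖ (List.ofFn y).prod := by
  intro n
  induction n with
  | zero => intro x y; simp [Matrix.one_kronecker_one]
  | succ n ih =>
    intro x y
    rw [List.ofFn_succ, List.ofFn_succ (f := x), List.ofFn_succ (f := y)]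
    rw [List.prod_cons, List.prod_cons, List.prod_cons]
    rw [ih (fun i => x i.succ) (fun i => y i.succ)]
    rw [← Matrix.mul_kronecker_mul]

lemma ptrace2_kron (σ : Mat m) (X Y : Mat m) :
    ptrace2 ((1 ⊗ₖ σ) * (X ⊗ₖ Y)) = Matrix.trace (σ * Y) • X := by
  rw [← Matrix.mul_kronecker_mul, one_mul]
  ext i j
  simp only [ptrace2, Matrix.of_apply, Matrix.kroneckerMap_apply, Matrix.smul_apply,
    smul_eq_mul, Matrix.trace, Matrix.diag_apply]
  rw [Finset.sum_mul]
  exact Finset.sum_congr rfl fun s _ => mul_comm _ _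

/-- `M ↦ Tr₂[(1 ⊗ σ) M]` as a linear map. -/
def TTmap (σ : Mat m) : Mat2 m →ₗ[ℂ] Mat m where
  toFun M := ptrace2 ((1 ⊗ₖ σ) * M)
  map_add' x y := by
    ext i j
    simp [ptrace2, mul_add, Finset.sum_add_distrib]
  map_smul' c x := by
    ext i j
    simp [ptrace2, Matrix.mul_smul, Finset.mul_sum, Finset.smul_sum]

lemma conj_list (U : Mat2 m) (hU1 : Uᴴ * U = 1) (hU2 : U * Uᴴ = 1) (u : List (Mat2 m)) :
    Uᴴ * u.prod * U = (u.map fun X => Uᴴ * X * U).prod := by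
  induction u with
  | nil => simpa using hU1
  | cons x u ih =>
    rw [List.map_cons, List.prod_cons, List.prod_cons, ← ih]
    calc Uᴴ * (x * u.prod) * U = Uᴴ * (x * ((U * Uᴴ) * u.prod)) * U := by rw [hU2, one_mul]
      _ = (Uᴴ * x * U) * (Uᴴ * u.prod * U) := by noncomm_ring
end KronPtrace

section SortLemmas

variable {m : ℕ}

lemma sort_eq_ofFn (s : Finset (Fin m)) {k : ℕ} (h : s.card = k) :
    s.sort (· ≤ ·) = List.ofFn (fun i : Fin k => (s.orderEmbOfFin h i : Fin m)) := by
  apply List.ext_getElem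
  · simp [Finset.length_sort, h]
  · intro i h1 h2
    simp only [List.getElem_ofFn]
    rw [Finset.orderEmbOfFin_apply]
    simp

lemma oprod_eq_ofFn (f : Fin m → Mat m) (s : Finset (Fin m)) {k : ℕ} (h : s.card = k) :
    oprod f s = (List.ofFn fun i : Fin k => f (s.orderEmbOfFin h i)).prod := by
  rw [oprod, sort_eq_ofFn s h, List.map_ofFn]
  rfl

end SortLemmas
section Stage1

variable {m : ℕ}

lemma stage1 (f : Fin m → Mat m)
    (hff : ∀ i j : Fin m, f i * f j + f j * f i = 0)
    (hffd : ∀ i j : Fin m, f i * (f j)ᴴ + (f j)ᴴ * f i = if i = j then 1 else 0)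
    (σ : Mat m) (hσgauge : σ * numberOp f = numberOp f * σ) (hσtr : Matrix.trace σ = 1)
    (A B : Matrix (Fin m) (Fin m) ℂ)
    (U : Mat2 m) (hU1 : Uᴴ * U = 1) (hU2 : U * Uᴴ = 1)
    (hUact : ∀ i : Fin m,
      Uᴴ * aOp f i * U = (∑ k, A i k • aOp f k) + (∑ k, B i k • bOp f k))
    {n : ℕ} (r : Fin n → Fin m) :
    TTmap σ (Uᴴ * ((List.ofFn fun t => f (r t)).prod ⊗ₖ (1 : Mat m)) * U)
      = ∑ k : Fin n → Fin m,
          (∏ t, A (r t) (k t)) • (List.ofFn fun t => f (k t)).prod := by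
  classical
  set c : Fin m ⊕ Fin m → Mat2 m := Sum.elim (aOp f) (bOp f) with hc
  set γ : Fin m → (Fin m ⊕ Fin m) → ℂ := fun i => Sum.elim (A i) (B i) with hγ
  set term : (Fin n → Fin m ⊕ Fin m) → Mat m := fun g =>
    (∏ t, γ (r t) (g t)) •
      (Matrix.trace (σ * (List.ofFn fun t => Sum.elim (fun _ => (1 : Mat m)) f (g t)).prod) •
        (List.ofFn fun t => Sum.elim f (fun _ => parity f) (g t)).prod) with hterm
  have hone : (List.ofFn fun _ : Fin n => (1 : Mat m)).prod = 1 := by simp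
  have h1 : (List.ofFn fun t => f (r t)).prod ⊗ₖ (1 : Mat m)
      = (List.ofFn fun t => aOp f (r t)).prod := by
    rw [show (fun t => aOp f (r t)) = fun t => f (r t) ⊗ₖ (1 : Mat m) from rfl]
    rw [ofFn_prod_kron n (fun t => f (r t)) (fun _ => 1), hone]
  have h2 : Uᴴ * (List.ofFn fun t => aOp f (r t)).prod * U
      = (List.ofFn fun t => Uᴴ * aOp f (r t) * U).prod := by
    rw [conj_list U hU1 hU2, List.map_ofFn]
    rfl
  have h3 : ∀ i, Uᴴ * aOp f i * U = linComb c (γ i) := by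
    intro i
    rw [hUact i]
    show _ = ∑ s, γ i s • c s
    rw [Fintype.sum_sum_type]
    rfl
  have h4 : (List.ofFn fun t => Uᴴ * aOp f (r t) * U).prod
      = ∑ g : Fin n → Fin m ⊕ Fin m,
          (∏ t, γ (r t) (g t)) • (List.ofFn fun t => c (g t)).prod := by
    rw [show (fun t => Uᴴ * aOp f (r t) * U) = fun t => linComb c (γ (r t)) from
      funext fun t => h3 (r t)]
    exact prod_linComb_expand c fun t => γ (r t)
  have h5 : ∀ g : Fin n → Fin m ⊕ Fin m,
      TTmap σ ((∏ t, γ (r t) (g t)) • (List.ofFn fun t => c (g t)).prod) = term g := by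
    intro g
    rw [_root_.map_smul, hterm]
    congr 1
    have hsplit : (fun t => c (g t))
        = fun t => (Sum.elim f (fun _ => parity f) (g t))
            ⊗ₖ (Sum.elim (fun _ => (1 : Mat m)) f (g t)) := by
      funext t
      rcases hg : g t with k | k <;> simp [hg, hc, aOp, bOp]
    rw [hsplit, ofFn_prod_kron]
    exact ptrace2_kron σ _ _
  have hstep : TTmap σ (Uᴴ * ((List.ofFn fun t => f (r t)).prod ⊗ₖ (1 : Mat m)) * U)
      = ∑ g : Fin n → Fin m ⊕ Fin m, term g := by
    rw [h1, h2, h4, map_sum]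
    exact Finset.sum_congr rfl fun g _ => h5 g
  rw [hstep]
  -- kill the terms containing a `b`-operator
  have hzero : ∀ g : Fin n → Fin m ⊕ Fin m,
      g ∉ Finset.univ.image (fun k : Fin n → Fin m => Sum.inl ∘ k) → term g = 0 := by
    intro g hg
    have hex : ∃ t, (g t).isRight := by
      by_contra h'
      push_neg at h'
      have hall : ∀ t, ∃ a, g t = Sum.inl a := by
        intro t
        rcases hgt : g t with a | a
        · exact ⟨a, rfl⟩
        · have : (g t).isRight = true := by rw [hgt]; rfl
          exact absurd this (h' t)
      choose k hk using hall
      exact hg (Finset.mem_image.mpr ⟨k, Finset.mem_univ _, (funext hk).symm⟩)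
    obtain ⟨t0, ht0⟩ := hex
    have hqpos : 0 < (List.ofFn g).countP Sum.isRight := by
      rw [List.countP_pos_iff]
      exact ⟨g t0, by rw [List.mem_ofFn]; exact ⟨t0, rfl⟩, ht0⟩
    have hYlist : (List.ofFn fun t => Sum.elim (fun _ => (1 : Mat m)) f (g t))
        = (List.ofFn g).map (Sum.elim (fun _ => (1 : Mat m)) f) := by
      rw [List.map_ofFn]
      rfl
    have hkill : Matrix.trace
        (σ * (List.ofFn fun t => Sum.elim (fun _ => (1 : Mat m)) f (g t)).prod) = 0 := by
      rw [hYlist]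
      refine trace_kill f σ hσgauge _ (((List.ofFn g).countP Sum.isRight : ℕ) : ℂ) ?_ ?_
      · exact Nat.cast_ne_zero.mpr hqpos.ne'
      · exact numberOp_word f hff hffd (List.ofFn g)
    rw [hterm]
    simp only [hkill, zero_smul, smul_zero]
  have hinj : ∀ x ∈ (Finset.univ : Finset (Fin n → Fin m)), ∀ y ∈ Finset.univ,
      (fun k : Fin n → Fin m => (Sum.inl ∘ k : Fin n → Fin m ⊕ Fin m)) x
        = (fun k : Fin n → Fin m => (Sum.inl ∘ k : Fin n → Fin m ⊕ Fin m)) y → x = y := by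
    intro x _ y _ h
    funext t
    exact Sum.inl.inj (congrFun h t)
  calc ∑ g : Fin n → Fin m ⊕ Fin m, term g
      = ∑ g ∈ Finset.univ.image (fun k : Fin n → Fin m => Sum.inl ∘ k), term g :=
        (Finset.sum_subset (Finset.subset_univ _) fun g _ hg => hzero g hg).symm
    _ = ∑ k : Fin n → Fin m, term (Sum.inl ∘ k) := Finset.sum_image hinj
    _ = ∑ k : Fin n → Fin m, (∏ t, A (r t) (k t)) • (List.ofFn fun t => f (k t)).prod := by
        refine Finset.sum_congr rfl fun k _ => ?_
        simp only [hterm, hγ, Function.comp_apply, Sum.elim_inl, hone, mul_one, hσtr, one_smul]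

end Stage1
section Stage2

variable {m : ℕ}

lemma stage2 (f : Fin m → Mat m) (hf1 : ∀ i j, f i * f j = -(f j * f i))
    (A : Matrix (Fin m) (Fin m) ℂ) (I : Finset (Fin m)) :
    ∑ k : Fin I.card → Fin m,
        (∏ t, A (I.orderEmbOfFin rfl t) (k t)) • (List.ofFn fun t => f (k t)).prod
      = ∑ L : Finset (Fin m),
          if L.card = I.card then subDet A I L • oprod f L else 0 := by
  classical
  set n := I.card with hn
  set r : Fin n → Fin m := fun t => I.orderEmbOfFin rfl t with hr
  set F : (Fin n → Fin m) → Mat m :=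
    fun k => (∏ t, A (r t) (k t)) • (List.ofFn fun t => f (k t)).prod with hF
  -- drop non-injective k
  have hsplit : ∑ k : Fin n → Fin m, F k
      = ∑ k ∈ Finset.univ.filter (fun k : Fin n → Fin m => Function.Injective k), F k := by
    symm
    apply Finset.sum_subset (Finset.filter_subset _ _)
    intro k _ hk
    have hni : ¬ Function.Injective k := by
      intro h
      exact hk (Finset.mem_filter.mpr ⟨Finset.mem_univ _, h⟩)
    show (∏ t, A (r t) (k t)) • (List.ofFn fun t => f (k t)).prod = 0
    rw [prodF_eq_zero_of_not_injective f hf1 k hni, smul_zero]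
  rw [hsplit]
  -- partition by the image
  have hmaps : ∀ k ∈ Finset.univ.filter (fun k : Fin n → Fin m => Function.Injective k),
      Finset.image k Finset.univ ∈
        Finset.univ.filter (fun L : Finset (Fin m) => L.card = n) := by
    intro k hk
    have hinj : Function.Injective k := (Finset.mem_filter.mp hk).2
    refine Finset.mem_filter.mpr ⟨Finset.mem_univ _, ?_⟩
    rw [Finset.card_image_of_injective _ hinj, Finset.card_univ, Fintype.card_fin]
  rw [← Finset.sum_fiberwise_of_maps_to hmaps F]
  -- each fiber is a sum over permutations
  have hfiber : ∀ L ∈ Finset.univ.filter (fun L : Finset (Fin m) => L.card = n),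
      (∑ k ∈ (Finset.univ.filter (fun k : Fin n → Fin m => Function.Injective k)).filter
          (fun k => Finset.image k Finset.univ = L), F k)
        = subDet A I L • oprod f L := by
    intro L hL
    have hLcard : L.card = n := (Finset.mem_filter.mp hL).2
    set e : Fin n → Fin m := fun t => L.orderEmbOfFin hLcard t with he
    have hemem : ∀ t, e t ∈ L := fun t => Finset.orderEmbOfFin_mem L hLcard t
    have heinj : Function.Injective e := (L.orderEmbOfFin hLcard).injective
    set iso := L.orderIsoOfFin hLcard with hiso
    have hcoe : ∀ t, (iso t : Fin m) = e t := fun t => Finset.coe_orderIsoOfFin_apply L hLcard t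
    -- the bijection with permutations
    have hmem' : ∀ k (hk : k ∈ (Finset.univ.filter
        (fun k : Fin n → Fin m => Function.Injective k)).filter
          (fun k => Finset.image k Finset.univ = L)), ∀ t, k t ∈ L := by
      intro k hk t
      have himg : Finset.image k Finset.univ = L := (Finset.mem_filter.mp hk).2
      rw [← himg]
      exact Finset.mem_image_of_mem k (Finset.mem_univ t)
    have hstep : (∑ k ∈ (Finset.univ.filter
        (fun k : Fin n → Fin m => Function.Injective k)).filter
          (fun k => Finset.image k Finset.univ = L), F k)
        = ∑ π : Equiv.Perm (Fin n), F (fun t => e (π t)) := by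
      refine Finset.sum_bij' (i := fun k hk => Equiv.ofBijective
          (fun t => iso.symm ⟨k t, hmem' k hk t⟩) ?_)
        (j := fun π _ => fun t => e (π t)) ?_ ?_ ?_ ?_ ?_
      · -- bijective
        have hkinj : Function.Injective k :=
          (Finset.mem_filter.mp ((Finset.mem_filter.mp hk).1)).2
        refine (Finite.injective_iff_bijective).mp ?_
        intro a b hab
        have := iso.symm.injective hab
        exact hkinj (congrArg Subtype.val this)
      · intro k hk
        exact Finset.mem_univ _
      · -- j lands in the fiber
        intro π _
        have hinj2 : Function.Injective fun t => e (π t) := heinj.comp π.injective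
        refine Finset.mem_filter.mpr ⟨Finset.mem_filter.mpr ⟨Finset.mem_univ _, hinj2⟩, ?_⟩
        apply Finset.eq_of_subset_of_card_le
        · intro x hx
          obtain ⟨t, _, rfl⟩ := Finset.mem_image.mp hx
          exact hemem _
        · rw [Finset.card_image_of_injective _ hinj2, Finset.card_univ, Fintype.card_fin,
            hLcard]
      · -- left inverse
        intro k hk
        funext t
        show e (iso.symm ⟨k t, hmem' k hk t⟩) = k t
        rw [← hcoe, OrderIso.apply_symm_apply]
      · -- right inverse
        intro π _
        refine Equiv.ext fun t => ?_
        have hgen : ∀ (x : Fin m) (hx : x ∈ L) (s : Fin n), x = e s →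
            iso.symm ⟨x, hx⟩ = s := by
          intro x hx s hxs
          subst hxs
          have hsub2 : (⟨e s, hx⟩ : {x // x ∈ L}) = iso s := by
            apply Subtype.ext
            rw [hcoe]
          rw [hsub2, OrderIso.symm_apply_apply]
        exact hgen _ _ (π t) rfl
      · -- summand equality
        intro k hk
        show F k = F (fun t => e (iso.symm ⟨k t, hmem' k hk t⟩))
        have hke : (fun t => e (iso.symm ⟨k t, hmem' k hk t⟩)) = k := by
          funext t
          rw [← hcoe, OrderIso.apply_symm_apply]
        rw [hke]
    rw [hstep]
    -- sum over permutations gives the determinant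
    set N : Matrix (Fin n) (Fin n) ℂ := Matrix.of fun p t => A (r t) (e p) with hN
    have hperm : ∀ π : Equiv.Perm (Fin n), F (fun t => e (π t))
        = (((Equiv.Perm.sign π : ℤ) : ℂ) * ∏ t, N (π t) t) •
            (List.ofFn fun t => f (e t)).prod := by
      intro π
      show (∏ t, A (r t) (e (π t))) • (List.ofFn fun t => f (e (π t))).prod = _
      rw [prodF_perm f hf1 e π, smul_smul, mul_comm]
      rfl
    rw [Finset.sum_congr rfl fun π _ => hperm π, ← Finset.sum_smul]
    have hdet : (∑ π : Equiv.Perm (Fin n),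
        ((Equiv.Perm.sign π : ℤ) : ℂ) * ∏ t, N (π t) t) = N.det :=
      (Matrix.det_apply' N).symm
    rw [hdet]
    -- identify with subDet and oprod
    have hLI : L.card = I.card := hLcard
    have hsub : subDet A I L = N.det := by
      rw [subDet, dif_pos hLI, ← Matrix.det_transpose]
      congr 1
    have hop : oprod f L = (List.ofFn fun t => f (e t)).prod := oprod_eq_ofFn f L hLcard
    rw [hsub, hop]
  rw [Finset.sum_congr rfl hfiber]
  rw [Finset.sum_filter]

end Stage2
/-- For a gauge-invariant normalized environment state, the Heisenberg action on
products of annihilation operators is given by the exterior powers (compound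
matrices) of the one-particle contraction `A`. -/
theorem PhiStar_on_annihilation_gauge_invariant (f : Fin m → Mat m)
    (hff : ∀ i j : Fin m, f i * f j + f j * f i = 0)
    (hffd : ∀ i j : Fin m, f i * (f j)ᴴ + (f j)ᴴ * f i = if i = j then 1 else 0)
    (σ : Mat m) (hσherm : σᴴ = σ) (hσpos : σ.PosSemidef)
    (hσgauge : σ * numberOp f = numberOp f * σ) (hσtr : Matrix.trace σ = 1)
    (A B : Matrix (Fin m) (Fin m) ℂ) (hAB : A * Aᴴ + B * Bᴴ = 1)
    (U : Mat2 m) (hU1 : Uᴴ * U = 1) (hU2 : U * Uᴴ = 1)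
    (hUact : ∀ i : Fin m,
      Uᴴ * aOp f i * U = (∑ k, A i k • aOp f k) + (∑ k, B i k • bOp f k))
    (I : Finset (Fin m)) :
    PhiStar U σ (oprod f I)
      =
    ∑ L : Finset (Fin m),
      if L.card = I.card then subDet A I L • oprod f L else 0 := by
  classical
  have hf1 : ∀ i j, f i * f j = -(f j * f i) := anticomm_of_car f hff
  have h0 : PhiStar U σ (oprod f I)
      = TTmap σ (Uᴴ * (oprod f I ⊗ₖ (1 : Mat m)) * U) := by
    show ptrace2 (((1 : Mat m) ⊗ₖ σ) * Uᴴ * (oprod f I ⊗ₖ (1 : Mat m)) * U)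
      = ptrace2 (((1 : Mat m) ⊗ₖ σ) * (Uᴴ * (oprod f I ⊗ₖ (1 : Mat m)) * U))
    congr 1
    simp only [Matrix.mul_assoc]
  rw [h0, oprod_eq_ofFn f I rfl]
  rw [stage1 f hff hffd σ hσgauge hσtr A B U hU1 hU2 hUact
    (fun t => I.orderEmbOfFin rfl t)]
  exact stage2 f hf1 A I

end
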